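/- Let d ≥ 3 and let u : ℝ^d → ℝ be a positive C³ function satisfying -Δu = u^((d+2)/(d-2)) at every point of ℝ^d. If ∫_{ℝ^d} u^(2d/(d-2)) dx < ∞ (with respect to Lebesgue measure), then ∫_{ℝ^d} ‖∇u‖² dx < ∞. -/

import Mathlib

/-
Test the equation against `η² u`, where `η = η_R` is a cutoff equal to `1` on `B_R`, supported in
`B_{2R}`, with `|∇η_R| ≤ C/R`. Integrating by parts and absorbing the cross term by AM-GM gives the
Caccioppoli inequality `∫ η²|∇u|² ≤ 2 ∫ η² u^{2d/(d-2)} + 4 ∫ u²|∇η|²`. By Hölder,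
`∫_{B_{2R}} u² ≤ ‖u‖²_{2d/(d-2)} |B_{2R}|^{2/d} = O(R²)`, which cancels the `R⁻²` in `|∇η_R|²`,
so `∫_{B_R} |∇u|²` is bounded uniformly in `R`.
-/

open MeasureTheory Metric

/-- The Euclidean Laplacian: the trace of the Hessian. -/
noncomputable def lap {d : ℕ} (u : EuclideanSpace ℝ (Fin d) → ℝ)
    (x : EuclideanSpace ℝ (Fin d)) : ℝ :=
  ∑ i, iteratedFDeriv ℝ 2 u x ![EuclideanSpace.single i 1, EuclideanSpace.single i 1]

theorem setIntegral_le_integral_rpow_mul_measureReal {α : Type*} [MeasurableSpace α]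
    {μ : Measure α} {s : Set α} (hs : μ s ≠ ⊤) {p q : ℝ} (hpq : p.HolderConjugate q)
    {f : α → ℝ} (hf0 : 0 ≤ f) (hf : AEStronglyMeasurable f μ)
    (hfp : Integrable (fun x => f x ^ p) μ) :
    ∫ x in s, f x ∂μ ≤ (∫ x, f x ^ p ∂μ) ^ (1 / p) * μ.real s ^ (1 / q) := by
  have : Fact (μ s < ⊤) := ⟨hs.lt_top⟩
  have hfLp : MemLp f (ENNReal.ofReal p) (μ.restrict s) := by
    refine (integrable_norm_rpow_iff hf.restrict (by simp [hpq.pos]) ENNReal.ofReal_ne_top).1 ?_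
    simpa [ENNReal.toReal_ofReal hpq.nonneg, Real.norm_of_nonneg (hf0 _)] using hfp.restrict
  have hH := integral_mul_le_Lp_mul_Lq_of_nonneg hpq (Filter.Eventually.of_forall hf0)
    (Filter.Eventually.of_forall fun _ => zero_le_one) hfLp (memLp_const (1 : ℝ))
  simp only [mul_one, Real.one_rpow, integral_const, smul_eq_mul,
    measureReal_restrict_apply_univ] at hH
  have hfp0 : 0 ≤ fun x => f x ^ p := fun x => Real.rpow_nonneg (hf0 x) p
  refine hH.trans ?_
  gcongr
  · exact setIntegral_nonneg_of_ae_restrict (Filter.Eventually.of_forall hfp0)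
  · exact (one_div_pos.2 hpq.pos).le
  · exact Filter.Eventually.of_forall hfp0
  · exact Measure.restrict_le_self

theorem setIntegral_closedBall_sq_le {d : ℕ} (hd : 2 < d)
    {u : EuclideanSpace ℝ (Fin d) → ℝ} (hu0 : 0 ≤ u) (hu : Continuous u)
    (hint : Integrable (fun x => u x ^ (2 * (d : ℝ) / ((d : ℝ) - 2)))) {r : ℝ} (hr : 0 ≤ r) :
    ∫ x in closedBall 0 r, u x ^ 2 ≤
      (∫ x, u x ^ (2 * (d : ℝ) / ((d : ℝ) - 2))) ^ (1 - 2 / (d : ℝ)) *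
        volume.real (ball (0 : EuclideanSpace ℝ (Fin d)) 1) ^ (2 / (d : ℝ)) * r ^ 2 := by
  have hd' : (2 : ℝ) < d := by exact_mod_cast hd
  have hd2 : (d : ℝ) - 2 ≠ 0 := by linarith
  have hpq : (d / (d - 2) : ℝ).HolderConjugate (d / 2) :=
    Real.holderConjugate_iff.2 ⟨by rw [one_lt_div] <;> linarith, by field_simp; ring⟩
  have hpow (x) : (u x ^ 2) ^ ((d : ℝ) / (d - 2)) = u x ^ (2 * (d : ℝ) / (d - 2)) := by
    rw [← Real.rpow_natCast, ← Real.rpow_mul (hu0 x)]; push_cast; ring_nf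
  have hH := setIntegral_le_integral_rpow_mul_measureReal
    (measure_closedBall_lt_top (x := 0) (r := r)).ne hpq
    (fun x => sq_nonneg (u x)) (hu.pow 2).aestronglyMeasurable (by simpa only [hpow] using hint)
  simp only [hpow] at hH
  rw [Measure.addHaar_real_closedBall _ _ hr, finrank_euclideanSpace_fin] at hH
  have hp : 1 / ((d : ℝ) / (d - 2)) = 1 - 2 / d := by field_simp
  have hq : 1 / ((d : ℝ) / 2) = 2 / d := one_div_div _ _
  have hr2 : (r ^ d) ^ (2 / (d : ℝ)) = r ^ 2 := by
    rw [← Real.rpow_natCast, ← Real.rpow_mul hr, mul_div_cancel₀ _ (by positivity), Real.rpow_two]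
  rw [hp, hq, Real.mul_rpow (by positivity) measureReal_nonneg, hr2] at hH
  exact hH.trans_eq (by ring)

theorem integrable_of_forall_setLIntegral_ball_le {α F : Type*} [PseudoMetricSpace α]
    [MeasurableSpace α] [NormedAddCommGroup F] {μ : Measure α} {g : α → F}
    (hg : AEStronglyMeasurable g μ) (c : α) {M : ENNReal} (hM : M ≠ ⊤)
    (hball : ∀ R, 0 < R → ∫⁻ x in ball c R, ‖g x‖ₑ ∂μ ≤ M) : Integrable g μ := by
  refine ⟨hg, ?_⟩
  rw [HasFiniteIntegral, ← setLIntegral_univ, ← iUnion_ball_nat_succ c,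
    setLIntegral_iUnion_of_directed _ (Monotone.directed_le fun m n hmn => ?_)]
  · exact (iSup_le fun n => hball _ n.cast_add_one_pos).trans_lt hM.lt_top
  · exact ball_subset_ball (by gcongr)

section Cutoff

variable {E : Type*} [NormedAddCommGroup E] [NormedSpace ℝ E] [HasContDiffBump E]

variable (E) in
noncomputable def unitBump : ContDiffBump (0 : E) := ⟨1, 2, one_pos, one_lt_two⟩

noncomputable def cutoff (R : ℝ) (x : E) : ℝ := unitBump E (R⁻¹ • x)

lemma cutoff_nonneg (R : ℝ) (x : E) : 0 ≤ cutoff R x := (unitBump E).nonneg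

lemma cutoff_le_one (R : ℝ) (x : E) : cutoff R x ≤ 1 := (unitBump E).le_one

lemma cutoff_eq_one {R : ℝ} (hR : 0 < R) {x : E} (hx : ‖x‖ ≤ R) : cutoff R x = 1 := by
  refine (unitBump E).one_of_mem_closedBall ?_
  rw [mem_closedBall_zero_iff, norm_smul, norm_inv, Real.norm_of_nonneg hR.le]
  exact inv_mul_le_one_of_le₀ hx hR.le

lemma contDiff_cutoff (R : ℝ) {n : ℕ∞} : ContDiff ℝ n (cutoff (E := E) R) :=
  (unitBump E).contDiff.comp (contDiff_const_smul _)

lemma tsupport_cutoff_subset {R : ℝ} (hR : 0 < R) :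
    tsupport (cutoff (E := E) R) ⊆ closedBall 0 (2 * R) := by
  refine closure_minimal (fun x hx => ?_) isClosed_closedBall
  have : R⁻¹ • x ∈ ball 0 2 := (unitBump E).support_eq ▸ hx
  rw [mem_ball_zero_iff, norm_smul, norm_inv, Real.norm_of_nonneg hR.le, inv_mul_lt_iff₀ hR] at this
  exact mem_closedBall_zero_iff.2 (by linarith)

lemma hasCompactSupport_cutoff [FiniteDimensional ℝ E] {R : ℝ} (hR : 0 < R) :
    HasCompactSupport (cutoff (E := E) R) :=
  (isCompact_closedBall _ _).of_isClosed_subset (isClosed_tsupport _) (tsupport_cutoff_subset hR)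

lemma exists_norm_fderiv_cutoff_le [FiniteDimensional ℝ E] :
    ∃ C, ∀ R, 0 < R → ∀ x : E, ‖fderiv ℝ (cutoff R) x‖ ≤ C / R := by
  obtain ⟨C, hC⟩ := (unitBump E).hasCompactSupport.fderiv (𝕜 := ℝ)
    |>.exists_bound_of_continuous ((unitBump E).contDiff.continuous_fderiv one_ne_zero)
  refine ⟨C, fun R hR x => ?_⟩
  unfold cutoff
  rw [fderiv_comp_smul, norm_smul, norm_inv, Real.norm_of_nonneg hR.le, inv_mul_eq_div]
  exact div_le_div_of_nonneg_right (hC _) hR.le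

lemma setLIntegral_ball_le_ofReal_integral_cutoff_sq_mul [FiniteDimensional ℝ E]
    [MeasurableSpace E] [BorelSpace E] {μ : Measure E} [IsFiniteMeasureOnCompacts μ]
    {g : E → ℝ} (hg : Continuous g) (hg0 : 0 ≤ g) {R : ℝ} (hR : 0 < R) :
    ∫⁻ x in ball 0 R, ‖g x‖ₑ ∂μ ≤ ENNReal.ofReal (∫ x, cutoff R x ^ 2 * g x ∂μ) := by
  have hη : Continuous (cutoff (E := E) R) := (contDiff_cutoff (n := 0) R).continuous
  have hint : Integrable (fun x => cutoff R x ^ 2 * g x) μ :=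
    (by fun_prop : Continuous _).integrable_of_hasCompactSupport <|
      (hasCompactSupport_cutoff hR).mono' fun x hx => subset_tsupport _ fun h => hx (by simp [h])
  calc ∫⁻ x in ball 0 R, ‖g x‖ₑ ∂μ = ∫⁻ x in ball 0 R, ‖cutoff R x ^ 2 * g x‖ₑ ∂μ :=
        setLIntegral_congr_fun measurableSet_ball fun x hx => by
          rw [cutoff_eq_one hR (mem_ball_zero_iff.1 hx).le, one_pow, one_mul]
    _ ≤ ∫⁻ x, ‖cutoff R x ^ 2 * g x‖ₑ ∂μ := setLIntegral_le_lintegral _ _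
    _ = ENNReal.ofReal (∫ x, cutoff R x ^ 2 * g x ∂μ) := by
        rw [← ofReal_integral_norm_eq_lintegral_enorm hint]
        simp only [norm_mul, norm_pow, Real.norm_eq_abs, sq_abs, abs_of_nonneg (hg0 _)]

lemma integral_mul_norm_fderiv_cutoff_sq_le [FiniteDimensional ℝ E] [MeasurableSpace E]
    [BorelSpace E] {μ : Measure E} [IsFiniteMeasureOnCompacts μ] {C R : ℝ} (hR : 0 < R)
    (hC : ∀ x : E, ‖fderiv ℝ (cutoff R) x‖ ≤ C / R) {g : E → ℝ} (hg : Continuous g) (hg0 : 0 ≤ g) :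
    ∫ x, g x * ‖fderiv ℝ (cutoff R) x‖ ^ 2 ∂μ ≤
      (C / R) ^ 2 * ∫ x in closedBall 0 (2 * R), g x ∂μ := by
  have hbound (x) : g x * ‖fderiv ℝ (cutoff R) x‖ ^ 2 ≤
      (closedBall 0 (2 * R)).indicator (fun x => (C / R) ^ 2 * g x) x := by
    by_cases hx : x ∈ closedBall 0 (2 * R)
    · rw [Set.indicator_of_mem hx, mul_comm]
      gcongr
      · exact hg0 x
      · exact hC x
    · rw [Set.indicator_of_notMem hx,
        fderiv_of_notMem_tsupport ℝ fun h => hx (tsupport_cutoff_subset hR h)]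
      simp
  rw [← integral_const_mul, ← integral_indicator measurableSet_closedBall]
  exact integral_mono_of_nonneg (.of_forall fun x => mul_nonneg (hg0 x) (by positivity))
    (IntegrableOn.integrable_indicator ((hg.continuousOn.integrableOn_compact
      (isCompact_closedBall _ _)).const_mul _) measurableSet_closedBall) (.of_forall hbound)

theorem integrable_of_forall_integral_cutoff_sq_mul_le {E : Type*} [NormedAddCommGroup E]
    [NormedSpace ℝ E] [HasContDiffBump E] [FiniteDimensional ℝ E] [MeasurableSpace E]
    [BorelSpace E] {μ : Measure E} [IsFiniteMeasureOnCompacts μ] {g : E → ℝ}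
    (hg : Continuous g) (hg0 : 0 ≤ g) {M : ℝ}
    (hM : ∀ R, 0 < R → ∫ x, cutoff R x ^ 2 * g x ∂μ ≤ M) : Integrable g μ :=
  integrable_of_forall_setLIntegral_ball_le hg.aestronglyMeasurable 0
    (ENNReal.ofReal_ne_top (r := M))
    fun R hR => (setLIntegral_ball_le_ofReal_integral_cutoff_sq_mul hg hg0 hR).trans
      (ENNReal.ofReal_le_ofReal (hM R hR))

end Cutoff

lemma neg_two_mul_mul_apply_le {E : Type*} [NormedAddCommGroup E] [NormedSpace ℝ E]
    (a b : ℝ) (L : E →L[ℝ] ℝ) (v : E) :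
    -(2 * a * b * L v) ≤ b ^ 2 * ‖v‖ ^ 2 / 2 + 2 * (a ^ 2 * ‖L‖ ^ 2) := by
  have hL : -(2 * a * b * L v) ≤ 2 * (|a| * ‖L‖) * (|b| * ‖v‖) :=
    calc -(2 * a * b * L v) ≤ 2 * |a| * |b| * ‖L v‖ := by
          simpa [abs_mul, mul_assoc] using neg_le_abs (2 * a * b * L v)
      _ ≤ 2 * |a| * |b| * (‖L‖ * ‖v‖) := by gcongr; exact L.le_opNorm v
      _ = 2 * (|a| * ‖L‖) * (|b| * ‖v‖) := by ring
  nlinarith [sq_nonneg (|b| * ‖v‖ - 2 * (|a| * ‖L‖)), sq_abs a, sq_abs b]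

theorem ContDiff.continuous_gradient {F : Type*} [NormedAddCommGroup F] [InnerProductSpace ℝ F]
    [CompleteSpace F] {f : F → ℝ} {n : WithTop ℕ∞} (hf : ContDiff ℝ n f) (hn : n ≠ 0) :
    Continuous (gradient f) :=
  (InnerProductSpace.toDual ℝ F).symm.continuous.comp (hf.continuous_fderiv hn)

section Euclidean

variable {d : ℕ}

local notation "e" => fun i : Fin d => EuclideanSpace.single i (1 : ℝ)

lemma sum_apply_single_mul_fderiv_apply_single (L : EuclideanSpace ℝ (Fin d) →L[ℝ] ℝ)
    (f : EuclideanSpace ℝ (Fin d) → ℝ) (x : EuclideanSpace ℝ (Fin d)) :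
    ∑ i, L (e i) * fderiv ℝ f x (e i) = L (gradient f x) := by
  conv_rhs => rw [← (EuclideanSpace.basisFun (Fin d) ℝ).sum_repr (gradient f x)]
  simp [← inner_gradient_left, EuclideanSpace.inner_single_right, mul_comm]

lemma lap_eq_sum_fderiv_fderiv_apply {u : EuclideanSpace ℝ (Fin d) → ℝ} (hu : ContDiff ℝ 2 u)
    (x : EuclideanSpace ℝ (Fin d)) :
    lap u x = ∑ i, fderiv ℝ (fun y => fderiv ℝ u y (e i)) x (e i) := by
  have hu' : DifferentiableAt ℝ (fderiv ℝ u) x :=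
    (hu.fderiv_right (m := 1) le_rfl).differentiable one_ne_zero x
  simp [lap, iteratedFDeriv_two_apply, fderiv_clm_apply hu' (differentiableAt_const _)]

theorem integral_mul_lap_eq_neg_integral_fderiv_gradient {u φ : EuclideanSpace ℝ (Fin d) → ℝ}
    (hu : ContDiff ℝ 2 u) (hφ : ContDiff ℝ 1 φ) (hφc : HasCompactSupport φ) :
    ∫ x, φ x * lap u x = -∫ x, fderiv ℝ φ x (gradient u x) := by
  have hDu (i : Fin d) : ContDiff ℝ 1 (fun y => fderiv ℝ u y (e i)) :=
    (hu.fderiv_right le_rfl).clm_apply contDiff_const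
  have hDφ (v) : Continuous (fun x => fderiv ℝ φ x v) :=
    (hφ.continuous_fderiv one_ne_zero).clm_apply continuous_const
  have hI₁ (i : Fin d) : Integrable (fun x => fderiv ℝ φ x (e i) * fderiv ℝ u x (e i)) :=
    (hDφ _).mul (hDu i).continuous |>.integrable_of_hasCompactSupport
      (hφc.fderiv_apply (𝕜 := ℝ) _).mul_right
  have hI₂ (i : Fin d) :
      Integrable (fun x => φ x * fderiv ℝ (fun y => fderiv ℝ u y (e i)) x (e i)) :=
    hφ.continuous.mul ((hDu i).continuous_fderiv one_ne_zero |>.clm_apply continuous_const)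
      |>.integrable_of_hasCompactSupport hφc.mul_right
  have hibp (i : Fin d) : ∫ x, φ x * fderiv ℝ (fun y => fderiv ℝ u y (e i)) x (e i) =
      -∫ x, fderiv ℝ φ x (e i) * fderiv ℝ u x (e i) :=
    integral_mul_fderiv_eq_neg_fderiv_mul_of_integrable (hI₁ i) (hI₂ i)
      (hφ.continuous.mul (hDu i).continuous |>.integrable_of_hasCompactSupport hφc.mul_right)
      (fun x _ => hφ.differentiable one_ne_zero x)
      (fun x _ => (hDu i).differentiable one_ne_zero x)
  simp_rw [lap_eq_sum_fderiv_fderiv_apply hu, Finset.mul_sum,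
    ← sum_apply_single_mul_fderiv_apply_single]
  rw [integral_finsetSum _ fun i _ => hI₂ i, integral_finsetSum _ fun i _ => hI₁ i]
  simp [hibp]

theorem integral_sq_mul_norm_gradient_sq_le {u η : EuclideanSpace ℝ (Fin d) → ℝ}
    (hu : ContDiff ℝ 2 u) (hη : ContDiff ℝ 1 η) (hηc : HasCompactSupport η) :
    ∫ x, η x ^ 2 * ‖gradient u x‖ ^ 2 ≤
      2 * (∫ x, η x ^ 2 * (u x * -lap u x)) + 4 * ∫ x, u x ^ 2 * ‖fderiv ℝ η x‖ ^ 2 := by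
  have hintegrable {g : EuclideanSpace ℝ (Fin d) → ℝ} (hg : Continuous g)
      (hg0 : ∀ x ∉ tsupport η, g x = 0) : Integrable g :=
    hg.integrable_of_hasCompactSupport <| hηc.mono' fun x hx => by_contra fun h => hx (hg0 x h)
  have hη0 {x} (hx : x ∉ tsupport η) : η x = 0 := image_eq_zero_of_notMem_tsupport hx
  have hDη0 {x} (hx : x ∉ tsupport η) : fderiv ℝ η x = 0 := fderiv_of_notMem_tsupport ℝ hx
  have hgrad : Continuous (gradient u) := hu.continuous_gradient two_ne_zero
  have hDη : Continuous (fderiv ℝ η) := hη.continuous_fderiv one_ne_zero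
  have hDφ (x) : fderiv ℝ (fun x => η x ^ 2 * u x) x (gradient u x) =
      η x ^ 2 * ‖gradient u x‖ ^ 2 + 2 * u x * η x * fderiv ℝ η x (gradient u x) := by
    rw [fderiv_fun_mul ((hη.differentiable one_ne_zero x).fun_pow 2)
      (hu.differentiable two_ne_zero x), fderiv_fun_pow _ (hη.differentiable one_ne_zero x)]
    simp only [add_apply, smul_apply, smul_eq_mul,
      ← inner_gradient_left, real_inner_self_eq_norm_sq, nsmul_eq_mul]
    ring
  have hgreen := integral_mul_lap_eq_neg_integral_fderiv_gradient hu
    (hη.pow 2 |>.mul (hu.of_le one_le_two))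
    (hηc.mono' fun x hx => by_contra fun h => hx (by simp [hη0 h]))
  simp_rw [hDφ] at hgreen
  have hA : Integrable fun x => η x ^ 2 * ‖gradient u x‖ ^ 2 :=
    hintegrable (by fun_prop) fun x hx => by simp [hη0 hx]
  have hB : Integrable fun x => 2 * u x * η x * fderiv ℝ η x (gradient u x) :=
    hintegrable (by fun_prop) fun x hx => by simp [hη0 hx]
  have hD : Integrable fun x => u x ^ 2 * ‖fderiv ℝ η x‖ ^ 2 :=
    hintegrable (by fun_prop) fun x hx => by simp [hDη0 hx]
  have hsplit : ∫ x, η x ^ 2 * (u x * -lap u x) =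
      (∫ x, η x ^ 2 * ‖gradient u x‖ ^ 2) + ∫ x, 2 * u x * η x * fderiv ℝ η x (gradient u x) := by
    rw [← integral_add hA hB, ← neg_neg (∫ x, (_ + _)), ← hgreen, ← integral_neg]
    simp only [mul_neg, mul_assoc]
  have hAMGM : ∫ x, -(2 * u x * η x * fderiv ℝ η x (gradient u x)) ≤
      ∫ x, (η x ^ 2 * ‖gradient u x‖ ^ 2 / 2 + 2 * (u x ^ 2 * ‖fderiv ℝ η x‖ ^ 2)) :=
    integral_mono hB.neg ((hA.div_const 2).add (hD.const_mul 2))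
    fun x => neg_two_mul_mul_apply_le (u x) (η x) (fderiv ℝ η x) (gradient u x)
  rw [integral_neg, integral_add (hA.div_const 2) (hD.const_mul 2), integral_div,
    integral_const_mul] at hAMGM
  linarith

end Euclidean

theorem exists_forall_integral_cutoff_sq_mul_norm_gradient_sq_le {d : ℕ} (hd : 2 < d)
    {u : EuclideanSpace ℝ (Fin d) → ℝ} (hu : ContDiff ℝ 2 u) (hupos : ∀ x, 0 < u x)
    (heq : ∀ x, -lap u x = u x ^ (((d : ℝ) + 2) / ((d : ℝ) - 2)))
    (hint : Integrable (fun x => u x ^ (2 * (d : ℝ) / ((d : ℝ) - 2)))) :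
    ∃ M, ∀ R, 0 < R → ∫ x, cutoff R x ^ 2 * ‖gradient u x‖ ^ 2 ≤ M := by
  have hd' : (2 : ℝ) < d := by exact_mod_cast hd
  have hd2 : (d : ℝ) - 2 ≠ 0 := by linarith
  obtain ⟨C, hC⟩ := exists_norm_fderiv_cutoff_le (E := EuclideanSpace ℝ (Fin d))
  set I := ∫ x, u x ^ (2 * (d : ℝ) / ((d : ℝ) - 2))
  set K := I ^ (1 - 2 / (d : ℝ)) *
    volume.real (ball (0 : EuclideanSpace ℝ (Fin d)) 1) ^ (2 / (d : ℝ))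
  have hsource (x) : u x * -lap u x = u x ^ (2 * (d : ℝ) / ((d : ℝ) - 2)) := by
    rw [heq, ← Real.rpow_one_add' (hupos x).le (by positivity)]
    congr 1
    field_simp
    ring
  refine ⟨2 * I + 4 * (4 * C ^ 2 * K), fun R hR => ?_⟩
  refine (integral_sq_mul_norm_gradient_sq_le hu (contDiff_cutoff R)
    (hasCompactSupport_cutoff hR)).trans ?_
  gcongr 2 * ?_ + 4 * ?_
  · simp only [hsource]
    have hpow_nonneg (x) : 0 ≤ u x ^ (2 * (d : ℝ) / ((d : ℝ) - 2)) :=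
      Real.rpow_nonneg (hupos x).le _
    refine integral_mono_of_nonneg
      (.of_forall fun x => mul_nonneg (sq_nonneg _) (hpow_nonneg x)) hint (.of_forall fun x => ?_)
    exact mul_le_of_le_one_left (hpow_nonneg x)
      (pow_le_one₀ (cutoff_nonneg R x) (cutoff_le_one R x))
  · calc ∫ x, u x ^ 2 * ‖fderiv ℝ (cutoff R) x‖ ^ 2
        ≤ (C / R) ^ 2 * ∫ x in closedBall 0 (2 * R), u x ^ 2 :=
          integral_mul_norm_fderiv_cutoff_sq_le hR (hC R hR) (by fun_prop) fun x => sq_nonneg _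
      _ ≤ (C / R) ^ 2 * (K * (2 * R) ^ 2) := by
          gcongr
          exact setIntegral_closedBall_sq_le hd (fun x => (hupos x).le) hu.continuous hint
            (by positivity)
      _ = 4 * C ^ 2 * K := by field_simp; ring

/-- Step (5.17) of Theorem 1.1 (iii), Euclidean case: a positive solution of the critical
Laplace equation that lies in `L^(2d/(d-2))` has finite Dirichlet energy. -/
theorem stmt_18 (d : ℕ) (hd : 3 ≤ d)
    (u : EuclideanSpace ℝ (Fin d) → ℝ) (hu : ContDiff ℝ 3 u) (hupos : ∀ x, 0 < u x)
    (heq : ∀ x, -lap u x = u x ^ (((d : ℝ) + 2) / ((d : ℝ) - 2)))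
    (hint : Integrable (fun x : EuclideanSpace ℝ (Fin d) =>
      u x ^ (2 * (d : ℝ) / ((d : ℝ) - 2))) volume) :
    Integrable (fun x : EuclideanSpace ℝ (Fin d) => ‖gradient u x‖ ^ 2) volume := by
  have hu2 : ContDiff ℝ 2 u := hu.of_le (by norm_num)
  obtain ⟨M, hM⟩ :=
    exists_forall_integral_cutoff_sq_mul_norm_gradient_sq_le hd hu2 hupos heq hint
  have hgrad := hu2.continuous_gradient two_ne_zero
  exact integrable_of_forall_integral_cutoff_sq_mul_le (by fun_prop) (fun x => by positivity) hM
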